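/- arXiv:1804.05516 — 6 statements merged into one kernel-verified Lean document; each statement's English description precedes it below -/
import Mathlib

section
/- Let q = p^m with p an odd prime and m odd. Then the number of elements w ∈ GF(q)* that are nonzero squares and satisfy Tr_{q/p}(w) = 0 equals (p^{m-1} - 1)/2. -/
/-!
Fix a nonsquare `t ∈ GF(p)`. Since `[GF(q) : GF(p)] = m` is odd, Euler's criterion shows that `t`
stays a nonsquare in `GF(q)`. The kernel of the trace is a `GF(p)`-subspace of size `p^(m-1)`, so
multiplication by `t` preserves it while swapping nonzero squares and nonsquares; hence exactly
half of its `p^(m-1) - 1` nonzero elements are squares.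
-/

open Finset Module

theorem Nat.exists_odd_pow_div_two_eq_div_two_mul {q n : ℕ} (hq : Odd q) (hn : Odd n) :
    ∃ e, Odd e ∧ q ^ n / 2 = q / 2 * e := by
  obtain ⟨k, rfl⟩ := hq
  refine ⟨∑ i ∈ range n, (2 * k + 1) ^ i, ?_, ?_⟩
  · rw [odd_sum_iff_odd_card_odd, filter_true_of_mem fun i _ => (odd_two_mul_add_one k).pow,
      card_range]
    exact hn
  · generalize hS : ∑ i ∈ range n, (2 * k + 1) ^ i = S
    rw [← geom_sum_mul_add (2 * k) n, hS, show (2 * k + 1) / 2 = k by omega,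
      show S * (2 * k) = 2 * (k * S) by ring]
    omega

theorem Nat.card_subtype_ne_and_add_one {α : Type*} [Finite α] {P : α → Prop} {a : α}
    (ha : P a) : Nat.card {x // x ≠ a ∧ P x} + 1 = Nat.card {x // P x} := by
  have := Set.ncard_sdiff_singleton_add_one (s := {x | P x}) ha (Set.toFinite _)
  rw [← Nat.card_coe_set_eq, ← Nat.card_coe_set_eq] at this
  refine Eq.trans ?_ this
  exact congrArg (· + 1) (Nat.card_congr (Equiv.subtypeEquivRight fun x => by simp [and_comm]))

namespace FiniteField

section Squares

variable {F : Type*} [Field F] [Fintype F]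

theorem isSquare_mul_iff_of_not_isSquare {s w : F} (hs : ¬IsSquare s) (hw : w ≠ 0) :
    IsSquare (s * w) ↔ ¬IsSquare w := by
  classical
  have hs0 : s ≠ 0 := by rintro rfl; exact hs .zero
  rw [← quadraticChar_one_iff_isSquare (mul_ne_zero hs0 hw),
    ← quadraticChar_neg_one_iff_not_isSquare, map_mul,
    quadraticChar_neg_one_iff_not_isSquare.mpr hs, neg_one_mul, neg_eq_iff_eq_neg]

theorem two_mul_card_nonzero_isSquare_of_mul_mem {s : F} (hs : ¬IsSquare s) {S : Set F}
    (hS : ∀ w ∈ S, s * w ∈ S) :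
    2 * Nat.card {w : F // w ≠ 0 ∧ IsSquare w ∧ w ∈ S} = Nat.card {w : F // w ≠ 0 ∧ w ∈ S} := by
  classical
  have hs0 : s ≠ 0 := by rintro rfl; exact hs .zero
  have hmul : Function.Injective (s * ·) := mul_right_injective₀ hs0
  have hswap : Nat.card {w : F // w ≠ 0 ∧ ¬IsSquare w ∧ w ∈ S} =
      Nat.card {w : F // w ≠ 0 ∧ IsSquare w ∧ w ∈ S} := by
    refine le_antisymm (Nat.card_le_card_of_injective
        (fun w => ⟨s * w, mul_ne_zero hs0 w.2.1, ?_, hS _ w.2.2.2⟩) ?_)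
      (Nat.card_le_card_of_injective
        (fun w => ⟨s * w, mul_ne_zero hs0 w.2.1, ?_, hS _ w.2.2.2⟩) ?_)
    · exact (isSquare_mul_iff_of_not_isSquare hs w.2.1).mpr w.2.2.1
    · exact fun w v h => Subtype.ext (hmul (congrArg Subtype.val h))
    · exact fun h => (isSquare_mul_iff_of_not_isSquare hs w.2.1).mp h w.2.2.1
    · exact fun w v h => Subtype.ext (hmul (congrArg Subtype.val h))
  rw [two_mul]
  nth_rw 2 [← hswap]
  simp only [Nat.card_eq_fintype_card, Fintype.card_subtype]
  rw [← card_filter_add_card_filter_not (s := {w | w ≠ 0 ∧ w ∈ S}) IsSquare, filter_filter,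
    filter_filter]
  congr 3 <;> ext w <;> tauto

end Squares

variable {K L : Type*} [Field K] [Fintype K] [Field L] [Fintype L] [Algebra K L]

theorem not_isSquare_algebraMap_of_odd_finrank (hodd : Odd (finrank K L)) {a : K}
    (ha : ¬IsSquare a) : ¬IsSquare (algebraMap K L a) := by
  have hK : ringChar K ≠ 2 := fun h => ha (isSquare_of_char_two h a)
  have hL : ringChar L ≠ 2 := Algebra.ringChar_eq K L ▸ hK
  have ha0 : a ≠ 0 := by rintro rfl; exact ha .zero
  have hpow : a ^ (Fintype.card K / 2) = -1 :=
    (pow_dichotomy hK ha0).resolve_left fun h => ha ((isSquare_iff hK ha0).mpr h)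
  obtain ⟨e, he, hcard⟩ := Nat.exists_odd_pow_div_two_eq_div_two_mul
    (Nat.odd_iff.mpr (odd_card_of_char_ne_two hK)) hodd
  rw [isSquare_iff hL ((map_ne_zero _).mpr ha0), card_eq_pow_finrank (K := K), hcard, pow_mul,
    ← map_pow, hpow, map_neg, map_one, he.neg_one_pow]
  exact Ring.neg_one_ne_one_of_char_ne_two hL

variable (K L) in
theorem natCard_trace_eq_zero :
    Nat.card {w : L // Algebra.trace K L w = 0} = Nat.card K ^ (finrank K L - 1) := by
  have hrange : finrank K (LinearMap.range (Algebra.trace K L)) = 1 := by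
    rw [LinearMap.range_eq_top.mpr (Algebra.trace_surjective K L), finrank_top, finrank_self]
  have := LinearMap.finrank_range_add_finrank_ker (Algebra.trace K L)
  change Nat.card (LinearMap.ker (Algebra.trace K L)) = _
  rw [natCard_eq_pow_finrank (K := K)]
  congr 1
  omega

end FiniteField

open FiniteField in
/-- Let `q = p^m` with `p` an odd prime and `m` odd. The number of nonzero squares
`w ∈ GF(q)*` with `Tr_{q/p}(w) = 0` equals `(p^(m-1) - 1)/2`. -/
theorem stmt4 (p m : ℕ) [Fact p.Prime] (hp : Odd p) (hm : Odd m)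
    {F : Type*} [Field F] [Fintype F] [Algebra (ZMod p) F]
    (hcard : Fintype.card F = p ^ m) :
    Nat.card {w : F // w ≠ 0 ∧ IsSquare w ∧ Algebra.trace (ZMod p) F w = 0} =
      (p ^ (m - 1) - 1) / 2 := by
  have hp2 : ringChar (ZMod p) ≠ 2 := by
    rw [ZMod.ringChar_zmod_n]
    rintro rfl
    exact Nat.not_even_iff_odd.mpr hp even_two
  have hfinrank : finrank (ZMod p) F = m := by
    have := card_eq_pow_finrank (K := ZMod p) (V := F)
    rw [hcard, ZMod.card] at this
    exact (Nat.pow_right_injective (Fact.out : p.Prime).two_le this).symm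
  obtain ⟨t, ht⟩ := exists_nonsquare hp2
  have hsquares := two_mul_card_nonzero_isSquare_of_mul_mem
    (not_isSquare_algebraMap_of_odd_finrank (L := F) (hfinrank ▸ hm) ht)
    (S := {w | Algebra.trace (ZMod p) F w = 0}) fun w hw => by
      simp_all [← Algebra.smul_def]
  have hker := Nat.card_subtype_ne_and_add_one
    (P := fun w : F => Algebra.trace (ZMod p) F w = 0) (map_zero _)
  rw [natCard_trace_eq_zero, Nat.card_zmod, hfinrank] at hker
  simp only [Set.mem_ofPred_eq] at hsquares
  omega
end

section
/- Let q = p^m with p an odd prime and m odd. Then the number of elements w ∈ GF(q)* that are nonzero squares and satisfy Tr_{q/p}(w) ≠ 0 equals p^{m-1}(p-1)/2. -/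
/-!
Fix a nonsquare `a` of `𝔽_p`. As `[𝔽_q : 𝔽_p] = m` is odd, `a` stays a nonsquare in `𝔽_q`:
taking norms in `a = y²` gives `a ^ m = N(y)²`. The trace is `𝔽_p`-linear, so multiplication by
`a` preserves the set of elements of nonzero trace, and it swaps the squares and nonsquares in
it. Hence exactly half of its `q - q / p` elements are squares.
-/

open Finset Module

theorem IsSquare.of_algebraMap_of_odd_finrank {K L : Type*} [Field K] [Ring L] [Algebra K L]
    (hodd : Odd (finrank K L)) {a : K} (ha : IsSquare (algebraMap K L a)) : IsSquare a := by
  rcases eq_or_ne a 0 with rfl | ha0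
  · exact IsSquare.zero
  obtain ⟨k, hk⟩ := hodd
  obtain ⟨y, hy⟩ := ha
  have hnorm : a ^ (2 * k + 1) = Algebra.norm K y * Algebra.norm K y := by
    rw [← hk, ← Algebra.norm_algebraMap, hy, map_mul]
  refine ⟨Algebra.norm K y / a ^ k, ?_⟩
  rw [div_mul_div_comm, ← hnorm]
  field_simp
  ring

namespace FiniteField

variable {F : Type*} [Field F] [Fintype F]

theorem isSquare_mul_iff_not_isSquare {b x : F} (hb : ¬IsSquare b) (hx : x ≠ 0) :
    IsSquare (b * x) ↔ ¬IsSquare x := by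
  classical
  have hb0 : b ≠ 0 := by rintro rfl; exact hb IsSquare.zero
  rw [← quadraticChar_one_iff_isSquare (mul_ne_zero hb0 hx),
    ← quadraticChar_neg_one_iff_not_isSquare, map_mul,
    quadraticChar_neg_one_iff_not_isSquare.mpr hb]
  rcases quadraticChar_dichotomy hx with h | h <;> rw [h] <;> decide

theorem two_mul_card_filter_isSquare [DecidablePred (IsSquare : F → Prop)] {s : Finset F}
    (h0 : 0 ∉ s) {b : F} (hb : ¬IsSquare b) (hs : ∀ x ∈ s, b * x ∈ s) :
    2 * #{x ∈ s | IsSquare x} = #s := by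
  have hb0 : b ≠ 0 := by rintro rfl; exact hb IsSquare.zero
  have hinj : Set.InjOn (b * ·) (s : Set F) := fun x _ y _ h => mul_left_cancel₀ hb0 h
  have hswap : ∀ x ∈ s, IsSquare (b * x) ↔ ¬IsSquare x :=
    fun x hx => isSquare_mul_iff_not_isSquare hb fun h => h0 (h ▸ hx)
  have hle : #{x ∈ s | IsSquare x} ≤ #{x ∈ s | ¬IsSquare x} := by
    refine card_le_card_of_injOn (b * ·) (fun x hx => ?_)
      (hinj.mono (coe_subset.mpr (filter_subset _ _)))
    simp only [mem_coe, mem_filter] at hx ⊢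
    exact ⟨hs x hx.1, fun h => (hswap x hx.1).mp h hx.2⟩
  have hge : #{x ∈ s | ¬IsSquare x} ≤ #{x ∈ s | IsSquare x} := by
    refine card_le_card_of_injOn (b * ·) (fun x hx => ?_)
      (hinj.mono (coe_subset.mpr (filter_subset _ _)))
    simp only [mem_coe, mem_filter] at hx ⊢
    exact ⟨hs x hx.1, (hswap x hx.1).mpr hx.2⟩
  rw [← card_filter_add_card_filter_not (s := s) (p := fun x => IsSquare x)]
  omega

end FiniteField

theorem LinearMap.natCard_mul_natCard_ker_of_surjective {R M N : Type*} [Ring R]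
    [AddCommGroup M] [Module R M] [AddCommGroup N] [Module R N] {f : M →ₗ[R] N}
    (hf : Function.Surjective f) : Nat.card N * Nat.card (ker f) = Nat.card M := by
  rw [(ker f).card_eq_card_quotient_mul_card, mul_comm,
    Nat.card_congr (f.quotKerEquivOfSurjective hf).toEquiv]

theorem Module.finrank_eq_of_card_eq_pow {K V : Type*} [Field K] [Fintype K] [AddCommGroup V]
    [Module K V] [Fintype V] {n : ℕ} (h : Fintype.card V = Fintype.card K ^ n) :
    finrank K V = n :=
  Nat.pow_right_injective Fintype.one_lt_card (card_eq_pow_finrank.symm.trans h)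

theorem FiniteField.card_mul_card_filter_trace_ne_zero (K L : Type*) [Field K] [Fintype K]
    [DecidableEq K] [Field L] [Fintype L] [Algebra K L] :
    Fintype.card K * #{x : L | Algebra.trace K L x ≠ 0} =
      (Fintype.card K - 1) * Fintype.card L := by
  have hker := LinearMap.natCard_mul_natCard_ker_of_surjective (Algebra.trace_surjective K L)
  have hker' : Nat.card (LinearMap.ker (Algebra.trace K L)) =
      #{x : L | Algebra.trace K L x = 0} := by
    rw [← Fintype.card_subtype, ← Nat.card_eq_fintype_card]; rfl
  rw [hker', Nat.card_eq_fintype_card, Nat.card_eq_fintype_card] at hker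
  have hsplit :=
    card_filter_add_card_filter_not (s := univ) (p := fun x : L => Algebra.trace K L x = 0)
  rw [card_univ] at hsplit
  have hK : 1 ≤ Fintype.card K := Fintype.card_pos
  zify [hK] at hker hsplit ⊢
  linear_combination (Fintype.card K : ℤ) * hsplit - hker

/-- Let `q = p^m` with `p` an odd prime and `m` odd. The number of nonzero squares
`w ∈ GF(q)*` with `Tr_{q/p}(w) ≠ 0` equals `p^(m-1)(p-1)/2`. -/
theorem stmt5 (p m : ℕ) [Fact p.Prime] (hp : Odd p) (hm : Odd m)
    {F : Type*} [Field F] [Fintype F] [Algebra (ZMod p) F]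
    (hcard : Fintype.card F = p ^ m) :
    Nat.card {w : F // w ≠ 0 ∧ IsSquare w ∧ Algebra.trace (ZMod p) F w ≠ 0} =
      p ^ (m - 1) * (p - 1) / 2 := by
  classical
  have hchar : ringChar (ZMod p) ≠ 2 := by
    rw [ZMod.ringChar_zmod_n]; rintro rfl; exact Nat.not_odd_iff_even.mpr even_two hp
  obtain ⟨a, ha⟩ := FiniteField.exists_nonsquare hchar
  have hfinrank : finrank (ZMod p) F = m := finrank_eq_of_card_eq_pow (by rw [hcard, ZMod.card])
  have hb : ¬IsSquare (algebraMap (ZMod p) F a) :=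
    fun h => ha (h.of_algebraMap_of_odd_finrank (hfinrank ▸ hm))
  set s : Finset F := {x | Algebra.trace (ZMod p) F x ≠ 0}
  have hstable : ∀ x ∈ s, algebraMap (ZMod p) F a * x ∈ s := fun x hx => by
    rw [mem_filter, ← Algebra.smul_def, map_smul, smul_eq_mul] at *
    exact ⟨mem_univ _, mul_ne_zero (fun h => ha (h ▸ IsSquare.zero)) hx.2⟩
  have hhalf := FiniteField.two_mul_card_filter_isSquare (by simp [s]) hb hstable
  have htrace := FiniteField.card_mul_card_filter_trace_ne_zero (ZMod p) F
  rw [ZMod.card, hcard] at htrace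
  have hcount : Nat.card {w : F // w ≠ 0 ∧ IsSquare w ∧ Algebra.trace (ZMod p) F w ≠ 0} =
      #{x ∈ s | IsSquare x} := by
    rw [Nat.card_eq_fintype_card, filter_filter, ← Fintype.card_subtype]
    refine Fintype.card_congr (Equiv.subtypeEquivRight fun w => ?_)
    exact ⟨fun h => ⟨h.2.2, h.2.1⟩, fun h => ⟨fun h0 => h.1 (h0 ▸ map_zero _), h.2, h.1⟩⟩
  obtain ⟨k, rfl⟩ := hm
  have hsquares : 2 * #{x ∈ s | IsSquare x} = p ^ (2 * k) * (p - 1) := by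
    refine Nat.eq_of_mul_eq_mul_left (Fact.out : p.Prime).pos ?_
    rw [hhalf, htrace, pow_succ]
    ring
  rw [hcount, Nat.add_sub_cancel, ← hsquares, Nat.mul_div_cancel_left _ two_pos]
end

section
/- Let q = 2^{2e+1} with e ≥ 1, σ = 2^{e+1}, and let t(x,y) = ux + vy + w(x^σ + xy + y^{σ+2}) for fixed u, v, w ∈ GF(q) with w ≠ 0. Then the character sum Δ = Σ_{(x,y) ∈ GF(q)²} (-1)^{Tr(t(x,y))} satisfies Δ² = q². -/
/-!
Squaring the character sum turns it into a sum of `(-1)^{Tr(t(P) + t(P + R))}` over pairs of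
points `P, R`. In characteristic two, with `σ` a power of two, the difference `t(P) + t(P + R)`
for `R = (a, b)` is `t(a, b)` plus a function of `y` plus `w b x`: it is affine in `x`. Summing
over `x` kills every `R` with `b ≠ 0`, and for `b = 0` the remainder is affine in `y` with slope
`w a`, so summing over `y` kills every `R ≠ 0`. Only `R = 0` survives, contributing `q²`.
-/

theorem Fintype.sq_sum_eq_sum_sum_mul_add {G R : Type*} [AddCommGroup G] [Fintype G]
    [CommSemiring R] (f : G → R) :
    (∑ g, f g) ^ 2 = ∑ r, ∑ g, f g * f (g + r) := by
  rw [sq, Fintype.sum_mul_sum]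
  conv_rhs => rw [Finset.sum_comm]
  exact Fintype.sum_congr _ _ fun g =>
    (Fintype.sum_equiv (Equiv.addLeft g) (fun r => f g * f (g + r)) _ fun _ => rfl).symm

namespace AddChar

variable {R R' : Type*} [CommRing R] [Fintype R] [DecidableEq R] [CommRing R'] [IsDomain R']
  {ψ : AddChar R R'}

theorem sum_add_mul_of_isPrimitive (hψ : IsPrimitive ψ) (c₀ c : R) :
    ∑ x, ψ (c₀ + c * x) = if c = 0 then Fintype.card R * ψ c₀ else 0 := by
  simp_rw [map_add_eq_mul, ← Finset.mul_sum, mul_comm c, sum_mulShift c hψ]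
  split_ifs <;> ring

end AddChar

noncomputable def traceSignChar (F : Type*) [Field F] [Algebra (ZMod 2) F] : AddChar F ℤ where
  toFun z := if Algebra.trace (ZMod 2) F z = 0 then 1 else -1
  map_zero_eq_one' := by simp
  map_add_eq_mul' a b := by
    rw [map_add]
    generalize Algebra.trace (ZMod 2) F a = s
    generalize Algebra.trace (ZMod 2) F b = t
    revert s t
    decide

theorem isPrimitive_traceSignChar (F : Type*) [Field F] [Fintype F] [Algebra (ZMod 2) F] :
    (traceSignChar F).IsPrimitive := by
  refine AddChar.IsPrimitive.of_ne_one fun h => ?_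
  obtain ⟨z, hz⟩ := Algebra.trace_surjective (ZMod 2) F 1
  have := DFunLike.congr_fun h z
  simp [traceSignChar, hz] at this

namespace SuzukiTits

-- The exponent `t` of the character sum.
def phase {F : Type*} [Field F] (σ : ℕ) (u v w x y : F) : F :=
  u * x + v * y + w * (x ^ σ + x * y + y ^ (σ + 2))

variable {F : Type*} [Field F] [CharP F 2] (k : ℕ) (u v w : F)

theorem phase_add_phase_add (x y a b : F) :
    phase (2 ^ k) u v w x y + phase (2 ^ k) u v w (x + a) (y + b) =
      phase (2 ^ k) u v w a b + w * (a * y + b ^ 2 * y ^ 2 ^ k + b ^ 2 ^ k * y ^ 2) +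
        w * b * x := by
  have hx : (x + a) ^ 2 ^ k = x ^ 2 ^ k + a ^ 2 ^ k := add_pow_char_pow x a 2 k
  have hy : (y + b) ^ 2 ^ k = y ^ 2 ^ k + b ^ 2 ^ k := add_pow_char_pow y b 2 k
  have hy' : (y + b) ^ (2 ^ k + 2) = (y ^ 2 ^ k + b ^ 2 ^ k) * (y ^ 2 + b ^ 2) := by
    rw [pow_add, hy, add_pow_char y b 2]
  simp only [phase, hx, hy']
  linear_combination CharTwo.two_eq_zero (R := F) *
    (u * x + v * y + w * (x ^ 2 ^ k + x * y + y ^ 2 ^ k * y ^ 2))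

variable [Fintype F] [DecidableEq F] {R : Type*} [CommRing R] [IsDomain R] {ψ : AddChar F R}

theorem sum_sum_phase_add_phase_add (hψ : ψ.IsPrimitive) (hw : w ≠ 0) (a b : F) :
    ∑ x, ∑ y, ψ (phase (2 ^ k) u v w x y + phase (2 ^ k) u v w (x + a) (y + b)) =
      if a = 0 ∧ b = 0 then (Fintype.card F : R) ^ 2 else 0 := by
  rw [Finset.sum_comm]
  simp_rw [phase_add_phase_add, ψ.sum_add_mul_of_isPrimitive hψ]
  rcases eq_or_ne b 0 with rfl | hb
  · have hσ : 2 ^ k ≠ 0 := by positivity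
    simp only [mul_zero, if_true, zero_pow hσ, zero_pow two_ne_zero, zero_mul, add_zero,
      and_true, ← Finset.mul_sum, ← mul_assoc, ψ.sum_add_mul_of_isPrimitive hψ]
    rcases eq_or_ne a 0 with rfl | ha
    · simp [phase, zero_pow hσ, sq]
    · simp [ha, hw]
  · simp [hb, hw]

end SuzukiTits

open SuzukiTits in
theorem stmt8_general (e : ℕ) {F : Type*} [Field F] [Fintype F] [Algebra (ZMod 2) F]
    (hcard : Fintype.card F = 2 ^ (2 * e + 1)) (u v w : F) (hw : w ≠ 0) :
    (∑ x : F, ∑ y : F,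
        if Algebra.trace (ZMod 2) F
            (u * x + v * y + w * (x ^ (2 ^ (e + 1)) + x * y + y ^ (2 ^ (e + 1) + 2))) = 0
        then (1 : ℤ) else -1) ^ 2 = ((2 : ℤ) ^ (2 * e + 1)) ^ 2 := by
  classical
  have : CharP F 2 := charP_of_injective_algebraMap (algebraMap (ZMod 2) F).injective 2
  change (∑ x, ∑ y, traceSignChar F (phase (2 ^ (e + 1)) u v w x y)) ^ 2 = _
  rw [← Fintype.sum_prod_type', Fintype.sq_sum_eq_sum_sum_mul_add]
  simp_rw [← AddChar.map_add_eq_mul, Fintype.sum_prod_type, Prod.fst_add, Prod.snd_add,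
    sum_sum_phase_add_phase_add _ _ _ _ (isPrimitive_traceSignChar F) hw]
  simp [ite_and, hcard]

/-- Let `q = 2^(2e+1)` with `e ≥ 1`, `σ = 2^(e+1)`, and
`t(x,y) = ux + vy + w(x^σ + xy + y^(σ+2))` with `w ≠ 0`. Then
`Δ = Σ_{(x,y)} (-1)^{Tr(t(x,y))}` satisfies `Δ² = q²`. -/
theorem stmt8 (e : ℕ) (he : 1 ≤ e) {F : Type*} [Field F] [Fintype F] [Algebra (ZMod 2) F]
    (hcard : Fintype.card F = 2 ^ (2 * e + 1)) (u v w : F) (hw : w ≠ 0) :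
    (∑ x : F, ∑ y : F,
        if Algebra.trace (ZMod 2) F
            (u * x + v * y + w * (x ^ (2 ^ (e + 1)) + x * y + y ^ (2 ^ (e + 1) + 2))) = 0
        then (1 : ℤ) else -1) ^ 2 = ((2 : ℤ) ^ (2 * e + 1)) ^ 2 :=
  stmt8_general e hcard u v w hw
end

section
/- Let q = 2^m with m > 1, let a, u, v, w ∈ GF(q) with w ≠ 0, and let g(x,y) = ux + vy + w(x² + xy + ay²). Then the number N₀ of pairs (x,y) ∈ GF(q)² with Tr_{q/2}(g(x,y)) = 0 satisfies N₀ = 2^{2m-1} + 2^{m-1} or N₀ = 2^{2m-1} - 2^{m-1}. -/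
/-!
Write `χ(t) = (-1)^t` on `ZMod 2` and `S = ∑ χ(Tr g(z))` over `z ∈ GF(q)²`. Counting zeros of a
`ZMod 2`-valued function gives `2 N₀ = q² + S`. In characteristic 2,
`g(z + h) = g(z) + g(h) + w (z₁h₂ + h₁z₂)`, and since the trace form is nondegenerate and `w ≠ 0`,
the character `z ↦ χ(Tr(w (z₁h₂ + h₁z₂)))` is trivial only for `h = 0`. Expanding `S²` and
substituting `z + h` for the second variable therefore leaves `S² = q²`, so `S = ±2^m`.
-/

open Finset

def signChar : AddChar (ZMod 2) ℤ where
  toFun a := if a = 0 then 1 else -1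
  map_zero_eq_one' := rfl
  map_add_eq_mul' := by decide

lemma signChar_apply (a : ZMod 2) : signChar a = if a = 0 then 1 else -1 := rfl

lemma two_mul_card_filter_eq_zero {α : Type*} [Fintype α] (f : α → ZMod 2) :
    2 * (#{z | f z = 0} : ℤ) = Fintype.card α + ∑ z, signChar (f z) := by
  classical
  have hcard := card_filter_add_card_filter_not (s := univ) (fun z => f z = 0)
  simp only [signChar_apply, sum_ite, sum_const, card_univ] at hcard ⊢
  rw [← hcard]
  push_cast
  ring

theorem sum_signChar_sq_eq_card {V : Type*} [AddCommGroup V] [Fintype V]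
    (f : V → ZMod 2) (β : V → V →+ ZMod 2)
    (hf : ∀ h z, f (z + h) = f z + f h + β h z) (hβ : ∀ h, h ≠ 0 → β h ≠ 0) :
    (∑ z, signChar (f z)) ^ 2 = Fintype.card V := by
  classical
  have hf0 : f 0 = 0 := by
    have h00 := hf 0 0
    rwa [add_zero, map_zero, add_zero, CharTwo.add_self_eq_zero] at h00
  have hβ0 : β 0 = 0 := by
    ext z
    simpa [hf0] using hf 0 z
  have inner : ∀ h, ∑ z, signChar (β h z) = if h = 0 then (Fintype.card V : ℤ) else 0 := by
    intro h
    split_ifs with hh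
    · simp [hh, hβ0]
    · refine AddChar.sum_eq_zero_of_ne_one (ψ := signChar.compAddMonoidHom (β h)) ?_
      obtain ⟨z, hz⟩ : ∃ z, β h z ≠ 0 := by simpa [DFunLike.ne_iff] using hβ h hh
      have hz1 : β h z = 1 := by generalize β h z = t at hz ⊢; revert t; decide
      refine AddChar.ne_one_iff.mpr ⟨z, ?_⟩
      simp [hz1, signChar_apply]
  have hsq : ∀ t : ZMod 2, signChar t * signChar t = 1 := by decide
  calc (∑ z, signChar (f z)) ^ 2
      = ∑ z, ∑ h, signChar (f z) * signChar (f (z + h)) := by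
        rw [sq, sum_mul_sum]
        refine sum_congr rfl fun z _ => ?_
        exact (Fintype.sum_equiv (Equiv.addLeft z) _ _ fun h => rfl).symm
    _ = ∑ h, signChar (f h) * ∑ z, signChar (β h z) := by
        rw [sum_comm]
        refine sum_congr rfl fun h _ => ?_
        rw [mul_sum]
        refine sum_congr rfl fun z _ => ?_
        rw [hf, AddChar.map_add_eq_mul, AddChar.map_add_eq_mul, ← mul_assoc, ← mul_assoc, hsq,
          one_mul]
    _ = Fintype.card V := by simp [inner, hf0]

lemma eq_two_pow_add_or_sub_of_two_mul_eq {m N : ℕ} {S : ℤ} (hm : m ≠ 0)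
    (hS : S ^ 2 = ((2 ^ m * 2 ^ m : ℕ) : ℤ)) (hN : 2 * (N : ℤ) = ((2 ^ m * 2 ^ m : ℕ) : ℤ) + S) :
    N = 2 ^ (2 * m - 1) + 2 ^ (m - 1) ∨ N = 2 ^ (2 * m - 1) - 2 ^ (m - 1) := by
  obtain ⟨k, rfl⟩ := Nat.exists_eq_add_one_of_ne_zero hm
  have h2m : 2 * (k + 1) - 1 = k + (k + 1) := by omega
  rw [h2m, Nat.add_sub_cancel, pow_add, pow_succ 2 k] at *
  have hk : 1 ≤ 2 ^ k := Nat.one_le_two_pow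
  generalize 2 ^ k = A at hk hS hN ⊢
  push_cast at hS hN
  rcases sq_eq_sq_iff_eq_or_eq_neg.mp (hS.trans (by ring : ((A : ℤ) * 2 * (A * 2)) = (A * 2) ^ 2))
    with rfl | rfl
  · left
    zify
    linarith
  · right
    have hA : A ≤ A * (A * 2) := by nlinarith
    zify [hA]
    linarith

section TraceQuadratic

variable {F : Type*} [Field F] [Algebra (ZMod 2) F]

lemma exists_trace_mul_ne_zero [Finite F] {c : F} (hc : c ≠ 0) :
    ∃ x, Algebra.trace (ZMod 2) F (c * x) ≠ 0 := by
  by_contra! h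
  exact hc ((traceForm_nondegenerate (ZMod 2) F).1 c h)

noncomputable def traceQuad (a u v w : F) (z : F × F) : ZMod 2 :=
  Algebra.trace (ZMod 2) F (u * z.1 + v * z.2 + w * (z.1 ^ 2 + z.1 * z.2 + a * z.2 ^ 2))

noncomputable def tracePolar (w : F) (h : F × F) : F × F →+ ZMod 2 :=
  AddMonoidHom.mk' (fun z => Algebra.trace (ZMod 2) F (w * (z.1 * h.2 + h.1 * z.2))) fun x y => by
    rw [← map_add]
    congr 1
    simp only [Prod.fst_add, Prod.snd_add]
    ring

lemma traceQuad_add (a u v w : F) (h z : F × F) :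
    traceQuad a u v w (z + h) = traceQuad a u v w z + traceQuad a u v w h + tracePolar w h z := by
  have : CharP F 2 := charP_of_injective_algebraMap (algebraMap (ZMod 2) F).injective 2
  simp only [traceQuad, tracePolar, AddMonoidHom.mk'_apply, ← map_add, Prod.fst_add, Prod.snd_add]
  congr 1
  linear_combination (w * z.1 * h.1 + w * a * z.2 * h.2) * CharTwo.two_eq_zero (R := F)

lemma tracePolar_ne_zero [Finite F] {w : F} (hw : w ≠ 0) {h : F × F} (hh : h ≠ 0) :
    tracePolar w h ≠ 0 := by
  intro h0
  have hz : ∀ z : F × F, Algebra.trace (ZMod 2) F (w * (z.1 * h.2 + h.1 * z.2)) = 0 :=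
    fun z => DFunLike.congr_fun h0 z
  obtain ⟨h₁, h₂⟩ := h
  rcases eq_or_ne h₂ 0 with rfl | h₂0
  · have h₁0 : h₁ ≠ 0 := fun h₁0 => hh (by rw [h₁0]; rfl)
    obtain ⟨y, hy⟩ := exists_trace_mul_ne_zero (mul_ne_zero hw h₁0)
    exact hy (by simpa [mul_assoc] using hz (0, y))
  · obtain ⟨x, hx⟩ := exists_trace_mul_ne_zero (mul_ne_zero hw h₂0)
    exact hx (by simpa [mul_assoc, mul_comm x] using hz (x, 0))

end TraceQuadratic

theorem stmt10_general (m : ℕ) {F : Type*} [Field F] [Fintype F] [Algebra (ZMod 2) F]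
    (hcard : Fintype.card F = 2 ^ m) (a u v w : F) (hw : w ≠ 0) :
    Nat.card {xy : F × F //
        Algebra.trace (ZMod 2) F
          (u * xy.1 + v * xy.2 + w * (xy.1 ^ 2 + xy.1 * xy.2 + a * xy.2 ^ 2)) = 0} =
      2 ^ (2 * m - 1) + 2 ^ (m - 1) ∨
    Nat.card {xy : F × F //
        Algebra.trace (ZMod 2) F
          (u * xy.1 + v * xy.2 + w * (xy.1 ^ 2 + xy.1 * xy.2 + a * xy.2 ^ 2)) = 0} =
      2 ^ (2 * m - 1) - 2 ^ (m - 1) := by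
  classical
  have hm : m ≠ 0 := by
    rintro rfl
    simpa [hcard] using Fintype.one_lt_card (α := F)
  have hS := sum_signChar_sq_eq_card (traceQuad a u v w) (tracePolar w) (traceQuad_add a u v w)
    fun _ => tracePolar_ne_zero hw
  have hN := two_mul_card_filter_eq_zero (traceQuad a u v w)
  rw [Fintype.card_prod, hcard] at hS hN
  have hcount : Nat.card {xy // traceQuad a u v w xy = 0} = #{xy | traceQuad a u v w xy = 0} := by
    rw [Nat.card_eq_fintype_card, Fintype.card_subtype]
  exact hcount ▸ eq_two_pow_add_or_sub_of_two_mul_eq hm hS hN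

/-- Let `q = 2^m`, `m > 1`, `w ≠ 0`, `g(x,y) = ux + vy + w(x² + xy + ay²)`. The number
`N₀` of `(x,y) ∈ GF(q)²` with `Tr_{q/2}(g(x,y)) = 0` is `2^(2m-1) ± 2^(m-1)`. -/
theorem stmt10 (m : ℕ) (hm : 1 < m) {F : Type*} [Field F] [Fintype F] [Algebra (ZMod 2) F]
    (hcard : Fintype.card F = 2 ^ m) (a u v w : F) (hw : w ≠ 0) :
    Nat.card {xy : F × F //
        Algebra.trace (ZMod 2) F
          (u * xy.1 + v * xy.2 + w * (xy.1 ^ 2 + xy.1 * xy.2 + a * xy.2 ^ 2)) = 0} =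
      2 ^ (2 * m - 1) + 2 ^ (m - 1) ∨
    Nat.card {xy : F × F //
        Algebra.trace (ZMod 2) F
          (u * xy.1 + v * xy.2 + w * (xy.1 ^ 2 + xy.1 * xy.2 + a * xy.2 ^ 2)) = 0} =
      2 ^ (2 * m - 1) - 2 ^ (m - 1) :=
  stmt10_general m hcard a u v w hw
end

section
/- Let q = 2^m with m > 1 and let C be the binary subfield code of the elliptic quadric code, i.e. C = { ((Tr_{q/2}(ux + vy + w(x² + xy + ay²)) + h)_{(x,y)∈GF(q)²}, Tr_{q/2}(w)) : u,v,w ∈ GF(q), h ∈ GF(2) }, where x² + x + a is irreducible over GF(q). Then C has length 2^{2m}+1, dimension 3m+1, and minimum distance 2^{2m-1} - 2^{m-1}. -/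
/-!
On each row `y = const` of the affine plane a codeword is an affine function of `x`: writing
`w = r²` and using `Tr(z²) = Tr z`, it is `Tr((r + u + r²y) x) + c(y)`. The linear part vanishes on exactly one row
`y*`, and on every other row the codeword is nonzero at exactly `q/2` points, so for `w ≠ 0` the
weight is at least `(q - 1) q/2 = 2^(2m-1) - 2^(m-1)`; for `w = 0` the codeword is a nonzero affine
function on `GF(q)²` and has weight at least `q²/2`. The bound is attained for `u = v = 0`,
`h = Tr a` and `w = r²` with `r ≠ 0`, `Tr r = 0` (such `r` exists as `m > 1`): the row `y*` is
then `Tr a + Tr a = 0` and the last coordinate is `Tr r² = 0`. Positivity of the bound makes the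
encoding injective, which gives the dimension.
-/

open Finset

section TwoValued

variable {G : Type*} [AddCommGroup G] [Fintype G]

theorem two_mul_hammingNorm_add_const {L : G →+ ZMod 2} (hL : L ≠ 0) (β : ZMod 2) :
    2 * hammingNorm (fun g => L g + β) = Fintype.card G := by
  classical
  obtain ⟨g₁, hg₁⟩ : ∃ g, L g ≠ 0 := by
    by_contra! h
    exact hL (AddMonoidHom.ext h)
  have hfiber (δ : ZMod 2) : #{g | L g = δ} = #{g | L g = 0} := by
    refine AddMonoidHom.card_fiber_eq_of_mem_range L ?_ ⟨0, map_zero L⟩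
    rcases eq_or_ne δ 0 with rfl | hδ
    · exact ⟨0, map_zero L⟩
    · exact ⟨g₁, by rw [Fin.eq_one_of_ne_zero _ hg₁, Fin.eq_one_of_ne_zero _ hδ]⟩
  have hcard := card_filter_add_card_filter_not (s := (univ : Finset G)) (fun g => L g = -β)
  have hne : #{g | ¬L g = -β} = hammingNorm (fun g => L g + β) := by
    simp only [hammingNorm, ne_eq, ← eq_neg_iff_add_eq_zero]
  rw [hfiber, card_univ, hne] at hcard
  have hcard0 := card_filter_add_card_filter_not (s := (univ : Finset G)) (fun g => L g = 0)
  have hone : #{g | ¬L g = 0} = #{g | L g = 1} := by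
    congr 1
    ext g
    simp only [mem_filter, mem_univ, true_and]
    exact ⟨Fin.eq_one_of_ne_zero _, fun h => h ▸ one_ne_zero⟩
  rw [hone, hfiber 1, card_univ] at hcard0
  omega

theorem card_le_two_mul_hammingNorm_add_const {L : G →+ ZMod 2} {β : ZMod 2}
    (h : L ≠ 0 ∨ β ≠ 0) : Fintype.card G ≤ 2 * hammingNorm (fun g => L g + β) := by
  rcases eq_or_ne L 0 with rfl | hL
  · simp [hammingNorm, h.resolve_left (not_not.2 rfl)]
    omega
  · exact (two_mul_hammingNorm_add_const hL β).ge

end TwoValued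

section Hamming

variable {α β γ : Type*} [Fintype α] [Fintype β] [Zero γ] [DecidableEq γ]

theorem hammingNorm_sum_elim (f : α → γ) (g : β → γ) :
    hammingNorm (Sum.elim f g) = hammingNorm f + hammingNorm g := by
  simp only [hammingNorm, card_filter, Fintype.sum_sum_type, Sum.elim_inl, Sum.elim_inr]
  rfl

theorem hammingNorm_eq_sum_rows (f : α × β → γ) :
    hammingNorm f = ∑ y, hammingNorm (fun x => f (x, y)) := by
  simp only [hammingNorm, card_filter]
  rw [Fintype.sum_prod_type_right]

theorem hammingNorm_eq_of_rows [DecidableEq β] (f : α × β → γ) (y₀ : β) {k : ℕ}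
    (hk : ∀ y ≠ y₀, hammingNorm (fun x => f (x, y)) = k) :
    hammingNorm f = hammingNorm (fun x => f (x, y₀)) + (Fintype.card β - 1) * k := by
  rw [hammingNorm_eq_sum_rows, ← add_sum_erase _ _ (mem_univ y₀),
    sum_congr rfl fun y hy => hk y (ne_of_mem_erase hy), sum_const, card_erase_of_mem (mem_univ _),
    card_univ, smul_eq_mul]

end Hamming

theorem two_pow_sub_two_pow_eq {m : ℕ} (hm : 1 ≤ m) :
    2 ^ (2 * m - 1) - 2 ^ (m - 1) = (2 ^ m - 1) * (2 ^ m / 2) := by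
  obtain ⟨n, rfl⟩ := Nat.exists_eq_add_of_le' hm
  rw [show 2 * (n + 1) - 1 = n + (n + 1) by omega, Nat.add_sub_cancel, pow_succ,
    Nat.mul_div_cancel _ two_pos, pow_add, Nat.sub_mul, one_mul, mul_comm, pow_succ]

theorem two_pow_sub_two_pow_pos {m : ℕ} (hm : 1 ≤ m) : 0 < 2 ^ (2 * m - 1) - 2 ^ (m - 1) :=
  Nat.sub_pos_of_lt (Nat.pow_lt_pow_right one_lt_two (by omega))

section QuadricCode

variable {F : Type*} [Field F] [Algebra (ZMod 2) F]

local notation "Tr" => Algebra.trace (ZMod 2) F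

section Trace

variable [Fintype F]

theorem trace_sq (x : F) : Tr (x ^ 2) = Tr x := by
  have := charP_of_injective_algebraMap' (ZMod 2) (A := F) 2
  simpa [ZMod.card] using
    Algebra.trace_eq_of_algEquiv (FiniteField.frobeniusAlgEquiv (ZMod 2) F 2) x

theorem exists_trace_mul_ne_zero_s16 {α : F} (hα : α ≠ 0) : ∃ x, Tr (α * x) ≠ 0 := by
  by_contra! h
  exact hα <| (traceForm_nondegenerate (ZMod 2) F).1 α h

theorem hammingNorm_trace_mul_add {α : F} (hα : α ≠ 0) (β : ZMod 2) :
    hammingNorm (fun x => Tr (α * x) + β) = Fintype.card F / 2 := by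
  obtain ⟨x, hx⟩ := exists_trace_mul_ne_zero_s16 hα
  have hL : (Algebra.traceForm (ZMod 2) F α).toAddMonoidHom ≠ 0 := fun h =>
    hx (by simpa using DFunLike.congr_fun h x)
  have := two_mul_hammingNorm_add_const hL β
  simp only [LinearMap.toAddMonoidHom_coe, Algebra.traceForm_apply] at this
  omega

theorem finrank_eq_of_card_eq_two_pow {m : ℕ} (hcard : Fintype.card F = 2 ^ m) :
    Module.finrank (ZMod 2) F = m := by
  have := Module.card_eq_pow_finrank (K := ZMod 2) (V := F)
  rw [ZMod.card, hcard] at this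
  exact (Nat.pow_right_injective le_rfl this).symm

theorem exists_ne_zero_trace_eq_zero {m : ℕ} (hm : 1 < m) (hcard : Fintype.card F = 2 ^ m) :
    ∃ r : F, r ≠ 0 ∧ Tr r = 0 := by
  have hker : LinearMap.ker (Tr) ≠ ⊥ := LinearMap.ker_ne_bot_of_finrank_lt <| by
    rwa [Module.finrank_self, finrank_eq_of_card_eq_two_pow hcard]
  obtain ⟨r, hr, hr0⟩ := Submodule.exists_mem_ne_zero_of_ne_bot hker
  exact ⟨r, hr0, hr⟩

end Trace

section Code

variable (a : F)

noncomputable def affinePart (u v w : F) (h : ZMod 2) (p : F × F) : ZMod 2 :=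
  Tr (u * p.1 + v * p.2 + w * (p.1 ^ 2 + p.1 * p.2 + a * p.2 ^ 2)) + h

noncomputable def quadricCode : (F × F × F × ZMod 2) →ₗ[ZMod 2] ((F × F) ⊕ Unit → ZMod 2) :=
  AddMonoidHom.toZModLinearMap 2
    { toFun := fun t => Sum.elim (affinePart a t.1 t.2.1 t.2.2.1 t.2.2.2) fun _ => Tr t.2.2.1
      map_zero' := by
        ext (p | _) <;> simp [affinePart]
      map_add' := by
        rintro ⟨u, v, w, h⟩ ⟨u', v', w', h'⟩
        ext (p | _)
        · simp only [affinePart, Prod.mk_add_mk, Sum.elim_inl, Pi.add_apply]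
          rw [← add_add_add_comm, ← map_add]
          ring_nf
        · simp }

theorem quadricCode_apply (u v w : F) (h : ZMod 2) :
    quadricCode a (u, v, w, h) = Sum.elim (affinePart a u v w h) fun _ => Tr w :=
  rfl

variable [Fintype F]

theorem affinePart_sq_apply (u v r : F) (h : ZMod 2) (x y : F) :
    affinePart a u v (r ^ 2) h (x, y) =
      Tr ((r + u + r ^ 2 * y) * x) + (Tr (v * y + r ^ 2 * a * y ^ 2) + h) := by
  have hsplit : u * x + v * y + r ^ 2 * (x ^ 2 + x * y + a * y ^ 2) =
      (r * x) ^ 2 + (u + r ^ 2 * y) * x + (v * y + r ^ 2 * a * y ^ 2) := by ring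
  rw [affinePart, hsplit, map_add, map_add, trace_sq, ← map_add, ← add_mul, add_assoc,
    add_assoc r]

theorem hammingNorm_affinePart_sq {r : F} (hr : r ≠ 0) (u v : F) (h : ZMod 2) :
    hammingNorm (affinePart a u v (r ^ 2) h) =
      hammingNorm (fun x => affinePart a u v (r ^ 2) h (x, -(r + u) / r ^ 2)) +
        (Fintype.card F - 1) * (Fintype.card F / 2) := by
  classical
  refine hammingNorm_eq_of_rows _ _ fun y hy => ?_
  simp only [affinePart_sq_apply]
  refine hammingNorm_trace_mul_add ?_ _
  contrapose! hy
  field_simp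
  linear_combination hy

theorem card_le_two_mul_hammingNorm_affinePart_zero {u v : F} {h : ZMod 2}
    (huvh : u ≠ 0 ∨ v ≠ 0 ∨ h ≠ 0) :
    Fintype.card (F × F) ≤ 2 * hammingNorm (affinePart a u v 0 h) := by
  let L : F × F →+ ZMod 2 :=
    (Algebra.traceForm (ZMod 2) F u).toAddMonoidHom.comp (AddMonoidHom.fst F F) +
      (Algebra.traceForm (ZMod 2) F v).toAddMonoidHom.comp (AddMonoidHom.snd F F)
  have hL : affinePart a u v 0 h = fun p => L p + h := by
    funext p
    simp [affinePart, L, Algebra.traceForm_apply]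
  rw [hL]
  apply card_le_two_mul_hammingNorm_add_const
  rcases huvh with hu | hv | hh
  · obtain ⟨x, hx⟩ := exists_trace_mul_ne_zero_s16 hu
    exact .inl fun h0 => hx (by simpa [L] using DFunLike.congr_fun h0 (x, 0))
  · obtain ⟨y, hy⟩ := exists_trace_mul_ne_zero_s16 hv
    exact .inl fun h0 => hy (by simpa [L] using DFunLike.congr_fun h0 (0, y))
  · exact .inr hh

theorem le_hammingNorm_quadricCode {m : ℕ} (hm : 1 ≤ m) (hcard : Fintype.card F = 2 ^ m)
    {t : F × F × F × ZMod 2} (ht : t ≠ 0) :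
    2 ^ (2 * m - 1) - 2 ^ (m - 1) ≤ hammingNorm (quadricCode a t) := by
  obtain ⟨u, v, w, h⟩ := t
  rw [quadricCode_apply, hammingNorm_sum_elim, two_pow_sub_two_pow_eq hm]
  refine le_add_right ?_
  rcases eq_or_ne w 0 with rfl | hw
  · have huvh : u ≠ 0 ∨ v ≠ 0 ∨ h ≠ 0 := by
      contrapose! ht
      obtain ⟨rfl, rfl, rfl⟩ := ht
      rfl
    have := card_le_two_mul_hammingNorm_affinePart_zero a huvh
    rw [Fintype.card_prod, hcard] at this
    have := Nat.mul_div_le (2 ^ m) 2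
    have := Nat.sub_le (2 ^ m) 1
    nlinarith
  · have := charP_of_injective_algebraMap' (ZMod 2) (A := F) 2
    obtain ⟨r, rfl⟩ := FiniteField.isSquare_of_char_two (ringChar.eq F 2) w
    rw [← sq] at hw ⊢
    rw [hammingNorm_affinePart_sq a (pow_ne_zero_iff two_ne_zero |>.1 hw), hcard]
    exact le_add_self

theorem exists_hammingNorm_quadricCode_eq {m : ℕ} (hm : 1 < m) (hcard : Fintype.card F = 2 ^ m) :
    ∃ t, hammingNorm (quadricCode a t) = 2 ^ (2 * m - 1) - 2 ^ (m - 1) := by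
  obtain ⟨r, hr, htr⟩ := exists_ne_zero_trace_eq_zero hm hcard
  refine ⟨(0, 0, r ^ 2, Tr a), ?_⟩
  have hrow : (fun x => affinePart a 0 0 (r ^ 2) (Tr a) (x, -(r + 0) / r ^ 2)) = 0 := by
    funext x
    have hlin : r + 0 + r ^ 2 * (-(r + 0) / r ^ 2) = 0 := by field_simp; ring
    have hconst : 0 * (-(r + 0) / r ^ 2) + r ^ 2 * a * (-(r + 0) / r ^ 2) ^ 2 = a := by
      field_simp
      ring
    rw [affinePart_sq_apply, hlin, hconst, zero_mul, map_zero, zero_add,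
      CharTwo.add_self_eq_zero, Pi.zero_apply]
  rw [quadricCode_apply, hammingNorm_sum_elim, hammingNorm_affinePart_sq a hr, hrow,
    hammingNorm_zero, trace_sq, htr, hcard, two_pow_sub_two_pow_eq hm.le]
  simp [hammingNorm]

theorem quadricCode_injective {m : ℕ} (hm : 1 ≤ m) (hcard : Fintype.card F = 2 ^ m) :
    Function.Injective (quadricCode a) := by
  refine (injective_iff_map_eq_zero _).2 fun t ht => by_contra fun h0 => ?_
  have := le_hammingNorm_quadricCode a hm hcard h0
  rw [ht, hammingNorm_zero] at this
  exact (two_pow_sub_two_pow_pos hm).not_ge this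

end Code

end QuadricCode

theorem stmt16_general (m : ℕ) (hm : 1 < m) {F : Type*} [Field F] [Fintype F]
    [Algebra (ZMod 2) F] (hcard : Fintype.card F = 2 ^ m) (a : F)
    (C : Set ((F × F) ⊕ Unit → ZMod 2))
    (hC : C = {c | ∃ (u v w : F) (h : ZMod 2), c = Sum.elim
        (fun xy : F × F => Algebra.trace (ZMod 2) F
          (u * xy.1 + v * xy.2 + w * (xy.1 ^ 2 + xy.1 * xy.2 + a * xy.2 ^ 2)) + h)
        (fun _ : Unit => Algebra.trace (ZMod 2) F w)}) :
    Nat.card ((F × F) ⊕ Unit) = 2 ^ (2 * m) + 1 ∧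
    (∃ S : Submodule (ZMod 2) ((F × F) ⊕ Unit → ZMod 2),
      (S : Set ((F × F) ⊕ Unit → ZMod 2)) = C ∧ Module.finrank (ZMod 2) S = 3 * m + 1) ∧
    (∀ c ∈ C, c ≠ 0 → 2 ^ (2 * m - 1) - 2 ^ (m - 1) ≤ hammingNorm c) ∧
    (∃ c ∈ C, c ≠ 0 ∧ hammingNorm c = 2 ^ (2 * m - 1) - 2 ^ (m - 1)) := by
  have hrange : C = Set.range (quadricCode a) := by
    rw [hC]
    ext c
    simp only [Set.mem_ofPred_eq, Set.mem_range, Prod.exists, eq_comm (a := c)]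
    rfl
  refine ⟨?_, ⟨LinearMap.range (quadricCode a), by rw [hrange, LinearMap.coe_range], ?_⟩, ?_, ?_⟩
  · rw [Nat.card_eq_fintype_card, Fintype.card_sum, Fintype.card_prod, hcard, ← pow_add, two_mul,
      Fintype.card_unit]
  · rw [LinearMap.finrank_range_of_inj (quadricCode_injective a hm.le hcard),
      Module.finrank_prod, Module.finrank_prod, Module.finrank_prod,
      finrank_eq_of_card_eq_two_pow hcard, Module.finrank_self]
    ring
  · rintro c hc hc0
    obtain ⟨t, rfl⟩ := hrange ▸ hc
    exact le_hammingNorm_quadricCode a hm.le hcard (by rintro rfl; exact hc0 (map_zero _))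
  · obtain ⟨t, ht⟩ := exists_hammingNorm_quadricCode_eq a hm hcard
    refine ⟨_, hrange ▸ ⟨t, rfl⟩, hammingNorm_pos_iff.1 ?_, ht⟩
    exact ht ▸ two_pow_sub_two_pow_pos hm.le

/-- The binary subfield code of the elliptic quadric code has parameters
`[2^(2m)+1, 3m+1, 2^(2m-1) - 2^(m-1)]`. -/
theorem stmt16 (m : ℕ) (hm : 1 < m) {F : Type*} [Field F] [Fintype F] [DecidableEq F]
    [Algebra (ZMod 2) F] (hcard : Fintype.card F = 2 ^ m) (a : F)
    (hirr : Irreducible (Polynomial.X ^ 2 + Polynomial.X + Polynomial.C a))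
    (C : Set ((F × F) ⊕ Unit → ZMod 2))
    (hC : C = {c | ∃ (u v w : F) (h : ZMod 2), c = Sum.elim
        (fun xy : F × F => Algebra.trace (ZMod 2) F
          (u * xy.1 + v * xy.2 + w * (xy.1 ^ 2 + xy.1 * xy.2 + a * xy.2 ^ 2)) + h)
        (fun _ : Unit => Algebra.trace (ZMod 2) F w)}) :
    Nat.card ((F × F) ⊕ Unit) = 2 ^ (2 * m) + 1 ∧
    (∃ S : Submodule (ZMod 2) ((F × F) ⊕ Unit → ZMod 2),
      (S : Set ((F × F) ⊕ Unit → ZMod 2)) = C ∧ Module.finrank (ZMod 2) S = 3 * m + 1) ∧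
    (∀ c ∈ C, c ≠ 0 → 2 ^ (2 * m - 1) - 2 ^ (m - 1) ≤ hammingNorm c) ∧
    (∃ c ∈ C, c ≠ 0 ∧ hammingNorm c = 2 ^ (2 * m - 1) - 2 ^ (m - 1)) :=
  stmt16_general m hm hcard a C hC
end

section
/- Let q = 2^{2e+1} with e ≥ 1, σ = 2^{e+1}, and let C be the binary code C = { ((Tr_{q/2}(ux + vy + w(x^σ + xy + y^{σ+2})) + h)_{(x,y)∈GF(q)²}, Tr_{q/2}(w)) : u,v,w ∈ GF(q), h ∈ GF(2) }. Then C has length 2^{4e+2}+1 and dimension 6e+4, and its nonzero weights all lie in {2^{4e+2}, 2^{4e+1}, 2^{4e+1} ± 2^{2e}, 2^{4e+1} ± 2^{2e} + 1}. -/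
/-!
The code is the image of the `𝔽₂`-linear map `(u, v, w, h) ↦ c(u, v, w, h)`. Put
`f(x, y) = x^σ + xy + y^(σ+2)`, `g = Tr(ux + vy + w f)` and `S = ∑_{x,y} (-1)^g(x, y)`; the
weight of a codeword on the affine coordinates is `(q² - (-1)^h S) / 2`, and the last coordinate
adds `0` or `1`. For `w = 0` the sum factors into two character sums, so `S ∈ {q², 0}`. For
`w ≠ 0`, `g` is bent, `S² = q²`: because `σ` is a power of the characteristic, for `d = (a, b)`
the difference `f(p + d) - f(p) - f(d)` is `b x` plus a function of `y` alone, so the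
autocorrelation `∑_p (-1)^(g(p + d) + g(p))` vanishes for `d ≠ 0` (sum over `x` if `b ≠ 0`, over
`y` if `b = 0`). Every nonzero parameter therefore gives a word of positive weight, so the map is
injective and the dimension is `3(2e + 1) + 1`.
-/

open Finset

namespace TitsOvoidCode

def signChar (t : ZMod 2) : ℤ := if t = 0 then 1 else -1

lemma signChar_eq_one_or_eq_neg_one : ∀ t : ZMod 2, signChar t = 1 ∨ signChar t = -1 := by
  decide

lemma signChar_add : ∀ a b : ZMod 2, signChar (a + b) = signChar a * signChar b := by decide

section Walsh

variable {G : Type*} [AddCommGroup G] [Fintype G]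

lemma sum_signChar_eq_zero {φ : G →+ ZMod 2} (hφ : φ ≠ 0) : ∑ g, signChar (φ g) = 0 := by
  obtain ⟨b, hb⟩ : ∃ b, φ b ≠ 0 := DFunLike.ne_iff.1 hφ
  have hχb : signChar (φ b) = -1 := if_neg hb
  have hshift : ∑ g, signChar (φ (g + b)) = ∑ g, signChar (φ g) :=
    Equiv.sum_comp (Equiv.addRight b) fun g => signChar (φ g)
  have hflip : ∑ g, signChar (φ (g + b)) = -∑ g, signChar (φ g) := by
    simp only [map_add, signChar_add, hχb, mul_neg_one, sum_neg_distrib]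
  linarith

lemma sq_sum_signChar (f : G → ZMod 2) :
    (∑ g, signChar (f g)) ^ 2 = ∑ d, ∑ g, signChar (f (g + d) + f g) := by
  rw [sum_comm, sq, sum_mul_sum]
  refine sum_congr rfl fun g _ => ?_
  rw [← Equiv.sum_comp (Equiv.addLeft g)]
  simp only [Equiv.coe_addLeft, signChar_add, add_comm]

end Walsh

section Hamming

variable {ι : Type*} [Fintype ι]

lemma two_mul_hammingNorm (g : ι → ZMod 2) :
    2 * (hammingNorm g : ℤ) = Fintype.card ι - ∑ i, signChar (g i) := by
  have hsign : ∀ t : ZMod 2, signChar t = 1 - 2 * if t ≠ 0 then 1 else 0 := by decide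
  simp only [hammingNorm, card_filter, hsign, sum_sub_distrib, ← mul_sum, sum_const, card_univ]
  push_cast
  ring

lemma hammingNorm_sum_elim {κ β : Type*} [Fintype κ] [Zero β] [DecidableEq β]
    (g₁ : ι → β) (g₂ : κ → β) :
    hammingNorm (Sum.elim g₁ g₂) = hammingNorm g₁ + hammingNorm g₂ := by
  simp only [hammingNorm, card_filter, Fintype.sum_sum_type, Sum.elim_inl, Sum.elim_inr]
  congr! 3

end Hamming

lemma finrank_eq_of_card_eq_pow {K V : Type*} [Field K] [Fintype K] [AddCommGroup V]
    [Module K V] [Fintype V] {n : ℕ} (hcard : Fintype.card V = Fintype.card K ^ n) :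
    Module.finrank K V = n :=
  Nat.pow_right_injective Fintype.one_lt_card (Module.card_eq_pow_finrank.symm.trans hcard)

section TitsPolynomial

variable {K : Type*} [CommRing K]

def titsPoly (k : ℕ) (x y : K) : K := x ^ 2 ^ k + x * y + y ^ (2 ^ k + 2)

lemma titsPoly_add [CharP K 2] (k : ℕ) (x y a b : K) :
    titsPoly k (x + a) (y + b) = titsPoly k x y + titsPoly k a b +
      (b * x + (a * y + b ^ 2 * y ^ 2 ^ k + b ^ 2 ^ k * y ^ 2)) := by
  have hfrob : ∀ s t : K, (s + t) ^ 2 ^ k = s ^ 2 ^ k + t ^ 2 ^ k := fun s t =>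
    add_pow_char_pow s t 2 k
  have hsq : (y + b) ^ 2 = y ^ 2 + b ^ 2 := add_pow_char y b 2
  simp only [titsPoly, pow_add, hfrob, hsq]
  ring

end TitsPolynomial

section TitsForm

variable {F : Type*} [Field F] [Fintype F] [Algebra (ZMod 2) F]

lemma sum_signChar_trace_mul {c : F} (hc : c ≠ 0) :
    ∑ x, signChar (Algebra.trace (ZMod 2) F (c * x)) = 0 :=
  sum_signChar_eq_zero (φ := (Algebra.traceForm (ZMod 2) F c).toAddMonoidHom) fun h =>
    hc <| (traceForm_nondegenerate (ZMod 2) F).1 c fun x => DFunLike.congr_fun h x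

noncomputable def titsForm (k : ℕ) (u v w : F) (p : F × F) : ZMod 2 :=
  Algebra.trace (ZMod 2) F (u * p.1 + v * p.2 + w * titsPoly k p.1 p.2)

lemma titsForm_add (k : ℕ) (u v w : F) (p d : F × F) :
    titsForm k u v w (p + d) = titsForm k u v w p + titsForm k u v w d +
      Algebra.trace (ZMod 2) F (w * d.2 * p.1) +
      Algebra.trace (ZMod 2) F
        (w * (d.1 * p.2 + d.2 ^ 2 * p.2 ^ 2 ^ k + d.2 ^ 2 ^ k * p.2 ^ 2)) := by
  have := charP_of_injective_algebraMap' (ZMod 2) (A := F) 2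
  simp only [titsForm, Prod.fst_add, Prod.snd_add, titsPoly_add, ← map_add]
  ring_nf

lemma sum_signChar_titsForm_add_add_eq_zero (k : ℕ) (u v : F) {w : F} (hw : w ≠ 0)
    {d : F × F} (hd : d ≠ 0) :
    ∑ p, signChar (titsForm k u v w (p + d) + titsForm k u v w p) = 0 := by
  have hsplit : ∀ p : F × F, signChar (titsForm k u v w (p + d) + titsForm k u v w p) =
      signChar (titsForm k u v w d) * (signChar (Algebra.trace (ZMod 2) F (w * d.2 * p.1)) *
        signChar (Algebra.trace (ZMod 2) F
          (w * (d.1 * p.2 + d.2 ^ 2 * p.2 ^ 2 ^ k + d.2 ^ 2 ^ k * p.2 ^ 2)))) := by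
    intro p
    rw [titsForm_add, ← signChar_add, ← signChar_add]
    congr 1
    linear_combination titsForm k u v w p * CharTwo.two_eq_zero (R := ZMod 2)
  simp only [hsplit, ← mul_sum, ← sum_mul, Fintype.sum_prod_type]
  obtain ⟨a, b⟩ := d
  rcases eq_or_ne b 0 with rfl | hb
  · have ha : a ≠ 0 := fun ha => hd (by rw [ha]; rfl)
    simp only [zero_pow two_ne_zero, zero_pow (pow_ne_zero k two_ne_zero), zero_mul, add_zero,
      ← mul_assoc, sum_signChar_trace_mul (mul_ne_zero hw ha), mul_zero]
  · simp only [sum_signChar_trace_mul (mul_ne_zero hw hb), zero_mul, mul_zero]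

lemma sq_sum_signChar_titsForm (k : ℕ) (u v : F) {w : F} (hw : w ≠ 0) :
    (∑ p, signChar (titsForm k u v w p)) ^ 2 = (Fintype.card F : ℤ) ^ 2 := by
  rw [sq_sum_signChar, Fintype.sum_eq_single 0 fun d hd =>
    sum_signChar_titsForm_add_add_eq_zero k u v hw hd]
  simp [CharTwo.add_self_eq_zero, signChar, sq]

lemma sum_signChar_titsForm_zero (k : ℕ) (u v : F) :
    ∑ p, signChar (titsForm k u v 0 p) =
      (∑ x, signChar (Algebra.trace (ZMod 2) F (u * x))) *
        ∑ y, signChar (Algebra.trace (ZMod 2) F (v * y)) := by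
  simp only [titsForm, zero_mul, add_zero, map_add, signChar_add, Fintype.sum_mul_sum,
    Fintype.sum_prod_type]

lemma two_mul_hammingNorm_titsForm_add (k : ℕ) (u v w : F) (h : ZMod 2) :
    2 * (hammingNorm (fun p => titsForm k u v w p + h) : ℤ) =
      (Fintype.card F : ℤ) ^ 2 - signChar h * ∑ p, signChar (titsForm k u v w p) := by
  simp only [two_mul_hammingNorm, Fintype.card_prod, signChar_add, mul_sum, mul_comm, sq]
  push_cast
  rfl

lemma two_mul_hammingNorm_titsForm_add_of_ne_zero (k : ℕ) (u v : F) {w : F} (hw : w ≠ 0)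
    (h : ZMod 2) :
    2 * (hammingNorm (fun p => titsForm k u v w p + h) : ℤ) =
        Fintype.card F ^ 2 + Fintype.card F ∨
      2 * (hammingNorm (fun p => titsForm k u v w p + h) : ℤ) =
        Fintype.card F ^ 2 - Fintype.card F := by
  rw [two_mul_hammingNorm_titsForm_add]
  rcases sq_eq_sq_iff_eq_or_eq_neg.1 (sq_sum_signChar_titsForm k u v hw) with hS | hS <;>
    rcases signChar_eq_one_or_eq_neg_one h with hh | hh <;> simp [hS, hh, sub_eq_add_neg]

lemma hammingNorm_titsForm_zero_add (k : ℕ) {u v : F} {h : ZMod 2} (hne : (u, v, h) ≠ 0) :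
    2 * (hammingNorm (fun p => titsForm k u v 0 p + h) : ℤ) = Fintype.card F ^ 2 ∨
      (hammingNorm (fun p => titsForm k u v 0 p + h) : ℤ) = Fintype.card F ^ 2 := by
  have hN := two_mul_hammingNorm_titsForm_add k u v 0 h
  rw [sum_signChar_titsForm_zero] at hN
  by_cases huv : u = 0 ∧ v = 0
  · obtain ⟨rfl, rfl⟩ := huv
    have hh : signChar h = -1 := if_neg fun hh => hne (by rw [hh]; rfl)
    have h0 : ∀ x : F, signChar (Algebra.trace (ZMod 2) F (0 * x)) = 1 := fun x => by
      simp [signChar]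
    simp only [h0, sum_const, card_univ, nsmul_eq_mul, mul_one, hh] at hN
    right
    linarith
  · have hS : (∑ x, signChar (Algebra.trace (ZMod 2) F (u * x))) *
        ∑ y, signChar (Algebra.trace (ZMod 2) F (v * y)) = 0 := by
      rcases not_and_or.1 huv with hu | hv
      · rw [sum_signChar_trace_mul hu, zero_mul]
      · rw [sum_signChar_trace_mul hv, mul_zero]
    rw [hS, mul_zero, sub_zero] at hN
    exact Or.inl hN

noncomputable def titsCode (k : ℕ) :
    F × F × F × ZMod 2 →ₗ[ZMod 2] ((F × F) ⊕ Unit → ZMod 2) where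
  toFun m := Sum.elim (fun p => titsForm k m.1 m.2.1 m.2.2.1 p + m.2.2.2)
    fun _ => Algebra.trace (ZMod 2) F m.2.2.1
  map_add' m m' := by
    ext (p | _)
    · simp only [titsForm, Prod.fst_add, Prod.snd_add, add_mul, map_add, Pi.add_apply,
        Sum.elim_inl]
      abel
    · simp
  map_smul' r m := by
    ext (p | _) <;> simp [titsForm, mul_add]

lemma hammingNorm_titsCode_mem {e : ℕ} (hcard : Fintype.card F = 2 ^ (2 * e + 1)) (k : ℕ)
    {m : F × F × F × ZMod 2} (hm : m ≠ 0) :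
    hammingNorm (titsCode k m) ∈ ({2 ^ (4 * e + 2), 2 ^ (4 * e + 1),
        2 ^ (4 * e + 1) + 2 ^ (2 * e), 2 ^ (4 * e + 1) - 2 ^ (2 * e),
        2 ^ (4 * e + 1) + 2 ^ (2 * e) + 1, 2 ^ (4 * e + 1) - 2 ^ (2 * e) + 1} : Set ℕ) := by
  obtain ⟨u, v, w, h⟩ := m
  set N := hammingNorm (fun p => titsForm k u v w p + h)
  set Q : ℕ := 2 ^ (2 * e)
  have hq : (Fintype.card F : ℤ) = 2 * Q := by simp [hcard, Q, pow_succ, mul_comm]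
  have hQ : 1 ≤ Q := Nat.one_le_two_pow
  have h4 : 2 ^ (4 * e + 2) = 4 * Q ^ 2 := by simp only [Q, ← pow_mul]; ring_nf
  have h3 : 2 ^ (4 * e + 1) = 2 * Q ^ 2 := by simp only [Q, ← pow_mul]; ring_nf
  have ht : hammingNorm (fun _ : Unit => Algebra.trace (ZMod 2) F w) ≤ 1 :=
    hammingNorm_le_card_fintype
  rw [show titsCode k (u, v, w, h) = Sum.elim _ _ from rfl, hammingNorm_sum_elim, h3, h4]
  simp only [Set.mem_insert_iff, Set.mem_singleton_iff]
  rcases eq_or_ne w 0 with rfl | hw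
  · have hN := hammingNorm_titsForm_zero_add k (by simpa [Prod.ext_iff] using hm)
    rw [hq] at hN
    rw [map_zero, show hammingNorm (fun _ : Unit => (0 : ZMod 2)) = 0 from hammingNorm_zero]
    have : N = 2 * Q ^ 2 ∨ N = 4 * Q ^ 2 := by
      rcases hN with hN | hN
      · exact Or.inl (by exact_mod_cast (by linarith : (N : ℤ) = 2 * Q ^ 2))
      · exact Or.inr (by exact_mod_cast (by linarith : (N : ℤ) = 4 * Q ^ 2))
    generalize Q ^ 2 = R at *
    omega
  · have hN := two_mul_hammingNorm_titsForm_add_of_ne_zero k u v hw h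
    rw [hq] at hN
    have : N = 2 * Q ^ 2 + Q ∨ N + Q = 2 * Q ^ 2 := by
      rcases hN with hN | hN
      · exact Or.inl (by exact_mod_cast (by linarith : (N : ℤ) = 2 * Q ^ 2 + Q))
      · exact Or.inr (by exact_mod_cast (by linarith : (N : ℤ) + Q = 2 * Q ^ 2))
    generalize Q ^ 2 = R at *
    omega

lemma titsCode_injective {e : ℕ} (hcard : Fintype.card F = 2 ^ (2 * e + 1)) (k : ℕ) :
    Function.Injective (titsCode (F := F) k) := by
  rw [← LinearMap.ker_eq_bot, LinearMap.ker_eq_bot']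
  intro m hm
  by_contra hm0
  have hmem := hammingNorm_titsCode_mem hcard k hm0
  rw [hm, hammingNorm_zero] at hmem
  have hlt : 2 ^ (2 * e) < 2 ^ (4 * e + 1) := Nat.pow_lt_pow_right one_lt_two (by omega)
  have hpos : 0 < 2 ^ (4 * e + 2) := Nat.two_pow_pos _
  simp only [Set.mem_insert_iff, Set.mem_singleton_iff] at hmem
  omega

end TitsForm

end TitsOvoidCode

open TitsOvoidCode

theorem stmt18_general (e : ℕ) {F : Type*} [Field F] [Fintype F]
    [Algebra (ZMod 2) F] (hcard : Fintype.card F = 2 ^ (2 * e + 1))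
    (C : Set ((F × F) ⊕ Unit → ZMod 2))
    (hC : C = {c | ∃ (u v w : F) (h : ZMod 2), c = Sum.elim
        (fun xy : F × F => Algebra.trace (ZMod 2) F
          (u * xy.1 + v * xy.2 +
            w * (xy.1 ^ (2 ^ (e + 1)) + xy.1 * xy.2 + xy.2 ^ (2 ^ (e + 1) + 2))) + h)
        (fun _ : Unit => Algebra.trace (ZMod 2) F w)}) :
    Nat.card ((F × F) ⊕ Unit) = 2 ^ (4 * e + 2) + 1 ∧
    (∃ S : Submodule (ZMod 2) ((F × F) ⊕ Unit → ZMod 2),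
      (S : Set ((F × F) ⊕ Unit → ZMod 2)) = C ∧ Module.finrank (ZMod 2) S = 6 * e + 4) ∧
    (∀ c ∈ C, c ≠ 0 → hammingNorm c ∈
      ({2 ^ (4 * e + 2), 2 ^ (4 * e + 1),
        2 ^ (4 * e + 1) + 2 ^ (2 * e), 2 ^ (4 * e + 1) - 2 ^ (2 * e),
        2 ^ (4 * e + 1) + 2 ^ (2 * e) + 1, 2 ^ (4 * e + 1) - 2 ^ (2 * e) + 1} : Set ℕ)) := by
  have hC_range : C = Set.range (titsCode (e + 1)) := by
    ext c
    simp [hC, titsCode, titsForm, titsPoly, eq_comm]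
  subst hC_range
  refine ⟨?_, ⟨LinearMap.range (titsCode (e + 1)), LinearMap.coe_range _, ?_⟩, ?_⟩
  · rw [Nat.card_eq_fintype_card, Fintype.card_sum, Fintype.card_prod, hcard, ← pow_add,
      Fintype.card_unit]
    ring_nf
  · rw [LinearMap.finrank_range_of_inj (titsCode_injective hcard _), Module.finrank_prod,
      Module.finrank_prod, Module.finrank_prod,
      finrank_eq_of_card_eq_pow (by rw [hcard, ZMod.card]), Module.finrank_self]
    ring
  · rintro _ ⟨m, rfl⟩ hc
    exact hammingNorm_titsCode_mem hcard _ fun hm => hc (by rw [hm, map_zero])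

/-- The binary subfield code of the Tits ovoid code (`q = 2^(2e+1)`, `σ = 2^(e+1)`) has
length `2^(4e+2)+1`, dimension `6e+4`, and all its nonzero weights lie in
`{2^(4e+2), 2^(4e+1), 2^(4e+1) ± 2^(2e), 2^(4e+1) ± 2^(2e) + 1}`. -/
theorem stmt18 (e : ℕ) (he : 1 ≤ e) {F : Type*} [Field F] [Fintype F] [DecidableEq F]
    [Algebra (ZMod 2) F] (hcard : Fintype.card F = 2 ^ (2 * e + 1))
    (C : Set ((F × F) ⊕ Unit → ZMod 2))
    (hC : C = {c | ∃ (u v w : F) (h : ZMod 2), c = Sum.elim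
        (fun xy : F × F => Algebra.trace (ZMod 2) F
          (u * xy.1 + v * xy.2 +
            w * (xy.1 ^ (2 ^ (e + 1)) + xy.1 * xy.2 + xy.2 ^ (2 ^ (e + 1) + 2))) + h)
        (fun _ : Unit => Algebra.trace (ZMod 2) F w)}) :
    Nat.card ((F × F) ⊕ Unit) = 2 ^ (4 * e + 2) + 1 ∧
    (∃ S : Submodule (ZMod 2) ((F × F) ⊕ Unit → ZMod 2),
      (S : Set ((F × F) ⊕ Unit → ZMod 2)) = C ∧ Module.finrank (ZMod 2) S = 6 * e + 4) ∧
    (∀ c ∈ C, c ≠ 0 → hammingNorm c ∈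
      ({2 ^ (4 * e + 2), 2 ^ (4 * e + 1),
        2 ^ (4 * e + 1) + 2 ^ (2 * e), 2 ^ (4 * e + 1) - 2 ^ (2 * e),
        2 ^ (4 * e + 1) + 2 ^ (2 * e) + 1, 2 ^ (4 * e + 1) - 2 ^ (2 * e) + 1} : Set ℕ)) :=
  stmt18_general e hcard C hC
end
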